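/- For each congruence class A of ⟨S⟩ on 𝔐(X), the class A contains at least one irreducible element, and A equals the union over all a ∈ A ∩ Irr(S) of the set of predecessors of a (elements that rewrite to a). -/
import Mathlib


namespace OpMon

/-- Letters of bracketed words: either a variable or a bracketed word. -/
inductive Letter (X : Type) : Type
  | of : X → Letter X
  | br : List (Letter X) → Letter X

/-- The free operated monoid `𝔐(X)`, modeled as lists of letters (free monoid on letters). -/
abbrev M (X : Type) := List (Letter X)

/-- The operator `⌊ ⌋` on `𝔐(X)`. -/
def L {X : Type} (w : M X) : M X := [Letter.br w]

mutual
  /-- Substitute each variable by a word (letter version). -/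
  def bindL {Y Z : Type} : Letter Y → (Y → M Z) → M Z
    | .of y, f => f y
    | .br w, f => [.br (bindW w f)]
  /-- Substitute each variable by a word (word version). -/
  def bindW {Y Z : Type} : M Y → (Y → M Z) → M Z
    | [], _ => []
    | a :: as, f => bindL a f ++ bindW as f
end

mutual
  /-- Count occurrences of variables satisfying `p` (letter version). -/
  def cntL {Y : Type} (p : Y → Bool) : Letter Y → ℕ
    | .of y => if p y then 1 else 0
    | .br w => cntW p w
  /-- Count occurrences of variables satisfying `p` (word version). -/
  def cntW {Y : Type} (p : Y → Bool) : M Y → ℕ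
    | [] => 0
    | a :: as => cntL p a + cntW p as
end

/-- The star letter `⋆`, modeled as `none`. -/
def starW {X : Type} : M (Option X) := [Letter.of none]

/-- `q` is a `⋆`-bracketed word: exactly one occurrence of `⋆`. -/
def IsStar {X : Type} (q : M (Option X)) : Prop :=
  cntW (fun o => o.isNone) q = 1

/-- Substitution `q|_u` of `u` for `⋆`. -/
def sub {X : Type} (q : M (Option X)) (u : M X) : M X :=
  bindW q (fun o => Option.elim o u (fun x => [Letter.of x]))

/-- Embed `𝔐(X)` into `𝔐(X ∪ {⋆})`. -/
def emb {X : Type} (w : M X) : M (Option X) :=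
  bindW w (fun x => [Letter.of (some x)])

/-- Substitute a `⋆`-word `r` for the `⋆` of `q`, yielding a word on `X ∪ {⋆}`. -/
def subS {X : Type} (q r : M (Option X)) : M (Option X) :=
  bindW q (fun o => Option.elim o r (fun x => [Letter.of (some x)]))

/-- `p` is a `(⋆₁,⋆₂)`-bracketed word (⋆₁ = `none`, ⋆₂ = `some none`). -/
def IsStar2 {X : Type} (p : M (Option (Option X))) : Prop :=
  cntW (fun o => o.isNone) p = 1 ∧
  cntW (fun o => match o with | some none => true | _ => false) p = 1

/-- Substitution `p|_{u₁,u₂}`. -/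
def sub2 {X : Type} (p : M (Option (Option X))) (u₁ u₂ : M X) : M X :=
  bindW p (fun o => match o with
    | none => u₁
    | some none => u₂
    | some (some x) => [Letter.of x])

/-- Substitution `p|_{u₁,⋆₂}`, a `⋆`-word. -/
def sub2L {X : Type} (p : M (Option (Option X))) (u₁ : M X) : M (Option X) :=
  bindW p (fun o => match o with
    | none => emb u₁
    | some none => [Letter.of none]
    | some (some x) => [Letter.of (some x)])

/-- Substitution `p|_{⋆₁,u₂}`, a `⋆`-word. -/
def sub2R {X : Type} (p : M (Option (Option X))) (u₂ : M X) : M (Option X) :=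
  bindW p (fun o => match o with
    | none => [Letter.of none]
    | some none => emb u₂
    | some (some x) => [Letter.of (some x)])

/-- `R^c`. -/
def Rc {X : Type} (R : Set (M X × M X)) : Set (M X × M X) :=
  {p | ∃ q a b, IsStar q ∧ (a, b) ∈ R ∧ p = (sub q a, sub q b)}

/-- Inverse relation `R⁻¹`. -/
def relInv {X : Type} (R : Set (M X × M X)) : Set (M X × M X) :=
  {p | (p.2, p.1) ∈ R}

/-- Closure under right mult. (C1), left mult. (C2), and the operator (C3). -/
def Closed {X : Type} (S : Set (M X × M X)) : Prop :=
  ∀ a b, (a, b) ∈ S → ∀ c : M X,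
    (a ++ c, b ++ c) ∈ S ∧ (c ++ a, c ++ b) ∈ S ∧ (L a, L b) ∈ S

/-- Composition of relations. -/
def relComp {X : Type} (R S : Set (M X × M X)) : Set (M X × M X) :=
  {p | ∃ c, (p.1, c) ∈ R ∧ (c, p.2) ∈ S}

/-- `relPow R n = R^(n+1)`. -/
def relPow {X : Type} (R : Set (M X × M X)) : ℕ → Set (M X × M X)
  | 0 => R
  | n + 1 => relComp (relPow R n) R

/-- Operated congruence. -/
def IsOpCong {X : Type} (T : Set (M X × M X)) : Prop :=
  (∀ a, (a, a) ∈ T) ∧ (∀ a b, (a, b) ∈ T → (b, a) ∈ T) ∧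
  (∀ a b c, (a, b) ∈ T → (b, c) ∈ T → (a, c) ∈ T) ∧ Closed T

/-- The operated congruence `⟨R⟩` generated by `R`. -/
def ocong {X : Type} (R : Set (M X × M X)) : Set (M X × M X) :=
  ⋂₀ {T | IsOpCong T ∧ R ⊆ T}

/-- Equivalence relation (as a set of pairs). -/
def IsEqv {X : Type} (T : Set (M X × M X)) : Prop :=
  (∀ a, (a, a) ∈ T) ∧ (∀ a b, (a, b) ∈ T → (b, a) ∈ T) ∧
  (∀ a b c, (a, b) ∈ T → (b, c) ∈ T → (a, c) ∈ T)

/-- The equivalence `T^e` generated by `T`. -/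
def eqgen {X : Type} (T : Set (M X × M X)) : Set (M X × M X) :=
  ⋂₀ {E | IsEqv E ∧ T ⊆ E}

/-- A monomial order: a well-founded linear order compatible with the operations. -/
def IsMonomialOrder {X : Type} (lt : M X → M X → Prop) : Prop :=
  WellFounded lt ∧
  (∀ a b, a = b ∨ lt a b ∨ lt b a) ∧
  (∀ a b c, lt a b → lt b c → lt a c) ∧
  (∀ u v w, lt u v → lt (u ++ w) (v ++ w) ∧ lt (w ++ u) (w ++ v) ∧ lt (L u) (L v))

/-- The term-rewriting system `Π_S`. -/
def PiS {X : Type} (lt : M X → M X → Prop) (S : Set (M X × M X)) : Set (M X × M X) :=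
  {p | ∃ q t v, IsStar q ∧ ((t, v) ∈ S ∨ (v, t) ∈ S) ∧ lt v t ∧ p = (sub q t, sub q v)}

/-- One-step rewriting. -/
def Rew {X : Type} (lt : M X → M X → Prop) (S : Set (M X × M X)) (a b : M X) : Prop :=
  (a, b) ∈ PiS lt S

/-- Joinability under `Π_S`. -/
def Joinable {X : Type} (lt : M X → M X → Prop) (S : Set (M X × M X)) (f g : M X) : Prop :=
  ∃ h, Relation.ReflTransGen (Rew lt S) f h ∧ Relation.ReflTransGen (Rew lt S) g h

/-- Termination of `Π_S`. -/
def Terminating {X : Type} (lt : M X → M X → Prop) (S : Set (M X × M X)) : Prop :=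
  ¬ ∃ f : ℕ → M X, ∀ n, Rew lt S (f n) (f (n + 1))

/-- Confluence of `Π_S`. -/
def Confluent {X : Type} (lt : M X → M X → Prop) (S : Set (M X × M X)) : Prop :=
  ∀ f g h, Relation.ReflTransGen (Rew lt S) f g → Relation.ReflTransGen (Rew lt S) f h →
    Joinable lt S g h

/-- Irreducible elements: `𝔐(X) \ Dom(Π_S)`. -/
def Irr {X : Type} (lt : M X → M X → Prop) (S : Set (M X × M X)) : Set (M X) :=
  {f | ∀ g, ¬ Rew lt S f g}

/-- Predecessors of `a`. -/
def Pre {X : Type} (lt : M X → M X → Prop) (S : Set (M X × M X)) (a : M X) : Set (M X) :=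
  {f | Relation.ReflTransGen (Rew lt S) f a}

/-- `W` is a section of `⟨S⟩`: every congruence class meets `W` in exactly one element. -/
def IsSection {X : Type} (S : Set (M X × M X)) (W : Set (M X)) : Prop :=
  ∀ a : M X, ∃! w, w ∈ W ∧ (a, w) ∈ ocong S

/-- Separated placements `(u₁,q₁)`, `(u₂,q₂)` in `w`. -/
def Separated {X : Type} (u₁ : M X) (q₁ : M (Option X)) (u₂ : M X) (q₂ : M (Option X))
    (w : M X) : Prop :=
  ∃ p, IsStar2 p ∧ q₁ = sub2R p u₂ ∧ q₂ = sub2L p u₁ ∧ w = sub2 p u₁ u₂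

/-- Nested placements: one context is a subcontext of the other. -/
def Nested {X : Type} (q₁ q₂ : M (Option X)) : Prop :=
  ∃ q, IsStar q ∧ (q₂ = subS q₁ q ∨ q₁ = subS q₂ q)

/-- Intersecting placements `(u₁,q₁)`, `(u₂,q₂)` in `w`. -/
def Intersecting {X : Type} (w u₁ : M X) (q₁ : M (Option X)) (u₂ : M X)
    (q₂ : M (Option X)) : Prop :=
  ∃ q a b c, IsStar q ∧ a ≠ ([] : M X) ∧ b ≠ ([] : M X) ∧ c ≠ ([] : M X) ∧
    w = sub q (a ++ b ++ c) ∧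
    ((q₁ = subS q (starW ++ emb c) ∧ q₂ = subS q (emb a ++ starW)) ∨
     (q₁ = subS q (emb a ++ starW) ∧ q₂ = subS q (starW ++ emb c)))

/-- Defining relations of the free `∗`-monoid. -/
def SStar (X : Type) : Set (M X × M X) :=
  {p | (∃ w : M X, p = (L (L w), w)) ∨
       (∃ u v : M X, u ≠ [] ∧ v ≠ [] ∧ p = (L (u ++ v), L v ++ L u)) ∨
       p = (L [], [])}

/-- Defining relations of the free group. -/
def SGrp (X : Type) : Set (M X × M X) :=
  {p | (∃ w : M X, p = (L (L w), w)) ∨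
       (∃ u v : M X, u ≠ [] ∧ v ≠ [] ∧ p = (L (u ++ v), L v ++ L u)) ∨
       (∃ w : M X, p = (L w ++ w, [])) ∨
       (∃ w : M X, p = (w ++ L w, []))}


/-- The substitution function used in `sub`. -/
def fsub {X : Type} (u : M X) : Option X → M X :=
  fun o => Option.elim o u (fun x => [Letter.of x])

theorem sub_eq_bind {X : Type} (q : M (Option X)) (u : M X) :
    sub q u = bindW q (fsub u) := rfl

mutual
theorem bind_cnt0L {X : Type} (a b : M X) (x : Letter (Option X))
    (h : cntL (fun o => o.isNone) x = 0) :
    bindL x (fsub a) = bindL x (fsub b) := by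
  cases x with
  | of o =>
    cases o with
    | none => simp [cntL] at h
    | some y => rfl
  | br w =>
    simp only [bindL]
    rw [bind_cnt0W a b w (by simpa [cntL] using h)]
theorem bind_cnt0W {X : Type} (a b : M X) (q : M (Option X))
    (h : cntW (fun o => o.isNone) q = 0) :
    bindW q (fsub a) = bindW q (fsub b) := by
  cases q with
  | nil => rfl
  | cons x rest =>
    simp only [cntW, Nat.add_eq_zero] at h
    simp only [bindW]
    rw [bind_cnt0L a b x h.1, bind_cnt0W a b rest h.2]
end

mutual
theorem bind_ltL {X : Type} (lt : M X → M X → Prop) (hlt : IsMonomialOrder lt)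
    (a b : M X) (hab : lt a b) (x : Letter (Option X))
    (h : cntL (fun o => o.isNone) x ≠ 0) :
    lt (bindL x (fsub a)) (bindL x (fsub b)) := by
  cases x with
  | of o =>
    cases o with
    | none => exact hab
    | some y => simp [cntL] at h
  | br w =>
    have hw := bind_ltW lt hlt a b hab w (by simpa [cntL] using h)
    exact (hlt.2.2.2 _ _ [] hw).2.2
theorem bind_ltW {X : Type} (lt : M X → M X → Prop) (hlt : IsMonomialOrder lt)
    (a b : M X) (hab : lt a b) (q : M (Option X))
    (h : cntW (fun o => o.isNone) q ≠ 0) :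
    lt (bindW q (fsub a)) (bindW q (fsub b)) := by
  cases q with
  | nil => simp [cntW] at h
  | cons x rest =>
    simp only [cntW] at h
    show lt (bindL x (fsub a) ++ bindW rest (fsub a))
      (bindL x (fsub b) ++ bindW rest (fsub b))
    by_cases hx : cntL (fun o => o.isNone) x = 0
    · have he := bind_cnt0L a b x hx
      have ht : cntW (fun o => o.isNone) rest ≠ 0 := by omega
      rw [he]
      exact (hlt.2.2.2 _ _ (bindL x (fsub b)) (bind_ltW lt hlt a b hab rest ht)).2.1
    · have hh := bind_ltL lt hlt a b hab x hx
      by_cases hr : cntW (fun o => o.isNone) rest = 0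
      · rw [bind_cnt0W a b rest hr]
        exact (hlt.2.2.2 _ _ _ hh).1
      · have htl := bind_ltW lt hlt a b hab rest hr
        exact hlt.2.2.1 _ _ _ (hlt.2.2.2 _ _ (bindW rest (fsub a)) hh).1
          (hlt.2.2.2 _ _ (bindL x (fsub b)) htl).2.1
end

mutual
theorem bind_congL {X : Type} (T : Set (M X × M X)) (hT : IsOpCong T)
    (a b : M X) (hab : (a, b) ∈ T) (x : Letter (Option X)) :
    (bindL x (fsub a), bindL x (fsub b)) ∈ T := by
  cases x with
  | of o =>
    cases o with
    | none => exact hab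
    | some y => exact hT.1 _
  | br w =>
    have hw := bind_congW T hT a b hab w
    exact (hT.2.2.2 _ _ hw []).2.2
theorem bind_congW {X : Type} (T : Set (M X × M X)) (hT : IsOpCong T)
    (a b : M X) (hab : (a, b) ∈ T) (q : M (Option X)) :
    (bindW q (fsub a), bindW q (fsub b)) ∈ T := by
  cases q with
  | nil => exact hT.1 _
  | cons x rest =>
    have h1 := (hT.2.2.2 _ _ (bind_congL T hT a b hab x) (bindW rest (fsub a))).1
    have h2 := (hT.2.2.2 _ _ (bind_congW T hT a b hab rest) (bindL x (fsub b))).2.1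
    exact hT.2.2.1 _ _ _ h1 h2
end

theorem mem_ocong_iff {X : Type} (S : Set (M X × M X)) (p : M X × M X) :
    p ∈ ocong S ↔ ∀ T, (IsOpCong T ∧ S ⊆ T) → p ∈ T := by
  simp [ocong, Set.mem_sInter]

theorem isOpCong_ocong {X : Type} (S : Set (M X × M X)) : IsOpCong (ocong S) := by
  refine ⟨?_, ?_, ?_, ?_⟩
  · intro a
    rw [mem_ocong_iff]
    exact fun T hT => hT.1.1 a
  · intro a b hab
    rw [mem_ocong_iff] at hab ⊢
    exact fun T hT => hT.1.2.1 a b (hab T hT)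
  · intro a b c hab hbc
    rw [mem_ocong_iff] at hab hbc ⊢
    exact fun T hT => hT.1.2.2.1 a b c (hab T hT) (hbc T hT)
  · intro a b hab c
    rw [mem_ocong_iff] at hab
    refine ⟨?_, ?_, ?_⟩ <;> rw [mem_ocong_iff] <;>
      intro T hT
    · exact (hT.1.2.2.2 a b (hab T hT) c).1
    · exact (hT.1.2.2.2 a b (hab T hT) c).2.1
    · exact (hT.1.2.2.2 a b (hab T hT) c).2.2

theorem subset_ocong {X : Type} (S : Set (M X × M X)) : S ⊆ ocong S := by
  intro p hp
  rw [mem_ocong_iff]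
  exact fun T hT => hT.2 hp

theorem rew_mem_ocong {X : Type} {lt : M X → M X → Prop} {S : Set (M X × M X)}
    {a b : M X} (h : Rew lt S a b) : (a, b) ∈ ocong S := by
  obtain ⟨q, t, v, hq, hS, hvt, heq⟩ := h
  have htv : (t, v) ∈ ocong S := by
    rcases hS with hS | hS
    · exact subset_ocong S hS
    · exact (isOpCong_ocong S).2.1 _ _ (subset_ocong S hS)
  have := bind_congW (ocong S) (isOpCong_ocong S) t v htv q
  rw [← sub_eq_bind, ← sub_eq_bind] at this
  have heq1 : a = sub q t := congrArg Prod.fst heq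
  have heq2 : b = sub q v := congrArg Prod.snd heq
  rw [heq1, heq2]
  exact this

theorem rtg_mem_ocong {X : Type} {lt : M X → M X → Prop} {S : Set (M X × M X)}
    {a b : M X} (h : Relation.ReflTransGen (Rew lt S) a b) : (a, b) ∈ ocong S := by
  induction h with
  | refl => exact (isOpCong_ocong S).1 a
  | tail h1 h2 ih => exact (isOpCong_ocong S).2.2.1 _ _ _ ih (rew_mem_ocong h2)

theorem rew_lt {X : Type} {lt : M X → M X → Prop} (hlt : IsMonomialOrder lt)
    {S : Set (M X × M X)} {a b : M X} (h : Rew lt S a b) : lt b a := by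
  obtain ⟨q, t, v, hq, hS, hvt, heq⟩ := h
  have heq1 : a = sub q t := congrArg Prod.fst heq
  have heq2 : b = sub q v := congrArg Prod.snd heq
  rw [heq1, heq2, sub_eq_bind, sub_eq_bind]
  exact bind_ltW lt hlt v t hvt q (by rw [hq]; exact one_ne_zero)

theorem exists_nf {X : Type} {lt : M X → M X → Prop} (hlt : IsMonomialOrder lt)
    (S : Set (M X × M X)) (f : M X) :
    ∃ c, Relation.ReflTransGen (Rew lt S) f c ∧ c ∈ Irr lt S := by
  induction f using WellFounded.induction hlt.1 with
  | _ g ih =>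
    by_cases hg : g ∈ Irr lt S
    · exact ⟨g, Relation.ReflTransGen.refl, hg⟩
    · simp only [Irr, Set.mem_setOf_eq, not_forall, not_not] at hg
      obtain ⟨y, hy⟩ := hg
      obtain ⟨c, hc1, hc2⟩ := ih y (rew_lt hlt hy)
      exact ⟨c, Relation.ReflTransGen.head hy hc1, hc2⟩

/-- each congruence class of `⟨S⟩` contains an irreducible element,
and is the union of the predecessor sets of its irreducible elements. -/
theorem class_inter_irr (X : Type) (lt : M X → M X → Prop)
    (hlt : IsMonomialOrder lt) (S : Set (M X × M X)) (a₀ : M X) :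
    ({b | (a₀, b) ∈ ocong S} ∩ Irr lt S).Nonempty ∧
    {b | (a₀, b) ∈ ocong S} =
      ⋃ a ∈ {b | (a₀, b) ∈ ocong S} ∩ Irr lt S, Pre lt S a := by
  constructor
  · obtain ⟨c, h1, h2⟩ := exists_nf hlt S a₀
    exact ⟨c, ⟨rtg_mem_ocong h1, h2⟩⟩
  · ext b
    simp only [Set.mem_setOf_eq, Set.mem_iUnion, Set.mem_inter_iff, exists_prop]
    constructor
    · intro hb
      obtain ⟨c, h1, h2⟩ := exists_nf hlt S b
      exact ⟨c, ⟨(isOpCong_ocong S).2.2.1 _ _ _ hb (rtg_mem_ocong h1), h2⟩, h1⟩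
    · rintro ⟨c, ⟨hc, _⟩, hpre⟩
      have hbc : (b, c) ∈ ocong S := rtg_mem_ocong hpre
      exact (isOpCong_ocong S).2.2.1 _ _ _ hc ((isOpCong_ocong S).2.1 _ _ hbc)

end OpMon
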